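/- arXiv:2108.03018 — 11 statements merged into one kernel-verified Lean document; each statement's English description precedes it below -/
import Mathlib

section
/- For any binary relation R on V and any subset B ⊆ V, the foreset of B under the reflexive-transitive closure of R equals the foreset of B under the reflexive-transitive closure of Δ_{Bᶜ}R; that is, R* B = (Δ_{Bᶜ} R)* B. -/
open Relation Set

local infixr:80 " ∘r " => Relation.Comp

variable {V : Type*}

/-- Subdiagonal relation on a subset `X` of `V`. -/
def dia (X : Set V) : V → V → Prop := fun a b => a = b ∧ a ∈ X

/-- Foreset of a subset `C` under a relation `R`. -/
def foreset (R : V → V → Prop) (C : Set V) : Set V := {a | ∃ c ∈ C, R a c}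

theorem foreset_mono {R S : V → V → Prop} (h : ∀ a b, R a b → S a b) (C : Set V) :
    foreset R C ⊆ foreset S C :=
  fun _ ⟨c, hc, hac⟩ => ⟨c, hc, h _ c hac⟩

theorem dia_comp_le (X : Set V) (R : V → V → Prop) (a b : V) :
    (dia X ∘r R) a b → R a b := by
  rintro ⟨_, ⟨rfl, _⟩, hab⟩
  exact hab

/-- Cutting an `R`-path into `B` at its first vertex in `B` gives a path all of whose
steps leave from outside `B`. -/
theorem mem_foreset_dia_compl_of_reflTransGen {R : V → V → Prop} {B : Set V} {a c : V}
    (hc : c ∈ B) (hac : ReflTransGen R a c) :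
    a ∈ foreset (ReflTransGen (dia Bᶜ ∘r R)) B := by
  induction hac using ReflTransGen.head_induction_on with
  | refl => exact ⟨c, hc, .refl⟩
  | @head x y hxy _ ih =>
    by_cases hx : x ∈ B
    · exact ⟨x, hx, .refl⟩
    · obtain ⟨c', hc', hyc'⟩ := ih
      exact ⟨c', hc', .head ⟨x, ⟨rfl, hx⟩, hxy⟩ hyc'⟩

theorem stmt2 (R : V → V → Prop) (B : Set V) :
    foreset (ReflTransGen R) B = foreset (ReflTransGen (dia Bᶜ ∘r R)) B := by
  refine Subset.antisymm ?_ (foreset_mono (ReflTransGen.mono (dia_comp_le Bᶜ R)) B)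
  rintro a ⟨c, hc, hac⟩
  exact mem_foreset_dia_compl_of_reflTransGen hc hac
end

section
/- Let E be a binary relation on V and W ⊆ V. Define the conditional parental relation P = Δ_{Wᶜ} E. Then (Pᵀ)* P* = Δ ∪ Δ_{Wᶜ}(E P*) ∪ (P* ᵀ Eᵀ)Δ_{Wᶜ} ∪ (Pᵀ)⁺ P⁺, where ⁺ denotes transitive closure and * reflexive-transitive closure. -/
open Relation Set

local infixr:80 " ∘r " => Relation.Comp

variable {V : Type*}

theorem stmt4 (E : V → V → Prop) (W : Set V)
    (P : V → V → Prop) (hP : P = dia Wᶜ ∘r E) :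
    ReflTransGen (flip P) ∘r ReflTransGen P
      = dia (univ : Set V)
        ⊔ dia Wᶜ ∘r (E ∘r ReflTransGen P)
        ⊔ (flip (ReflTransGen P) ∘r flip E) ∘r dia Wᶜ
        ⊔ TransGen (flip P) ∘r TransGen P := by
  have hPd : ∀ a b, P a b → a ∈ Wᶜ ∧ E a b := by
    intro a b hab
    rw [hP] at hab
    obtain ⟨c, ⟨rfl, hW⟩, hE⟩ := hab
    exact ⟨hW, hE⟩
  funext a b
  simp only [Pi.sup_apply, sup_Prop_eq, Relation.Comp, eq_iff_iff]
  constructor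
  · rintro ⟨c, h1, h2⟩
    have h1' : ReflTransGen P c a := by
      rwa [← Relation.reflTransGen_swap] at h1
    rcases (Relation.reflTransGen_iff_eq_or_transGen.mp h1') with hca | hca
    · rcases (Relation.reflTransGen_iff_eq_or_transGen.mp h2) with hcb | hcb
      · left; left; left; exact ⟨hca.trans hcb.symm, mem_univ _⟩
      · -- TransGen P c b, a = c
        obtain ⟨d, hPd', hdb⟩ := Relation.TransGen.head'_iff.mp (hca ▸ hcb : TransGen P a b)
        obtain ⟨hW, hE⟩ := hPd _ _ hPd'
        left; left; right
        exact ⟨a, ⟨rfl, hW⟩, d, hE, hdb⟩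
    · rcases (Relation.reflTransGen_iff_eq_or_transGen.mp h2) with hcb | hcb
      · -- TransGen P c a, b = c
        obtain ⟨d, hPd', hda⟩ := Relation.TransGen.head'_iff.mp (hcb ▸ hca : TransGen P b a)
        obtain ⟨hW, hE⟩ := hPd _ _ hPd'
        left; right
        exact ⟨b, ⟨d, hda, hE⟩, rfl, hW⟩
      · right
        exact ⟨c, Relation.transGen_swap.mpr hca, hcb⟩
  · rintro (((⟨rfl, -⟩ | ⟨c, ⟨rfl, hW⟩, d, hE, hdb⟩) | ⟨c, ⟨d, hda, hE⟩, rfl, hW⟩) | ⟨c, h1, h2⟩)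
    · exact ⟨a, ReflTransGen.refl, ReflTransGen.refl⟩
    · refine ⟨a, ReflTransGen.refl, ReflTransGen.head ?_ hdb⟩
      rw [hP]; exact ⟨a, ⟨rfl, hW⟩, hE⟩
    · refine ⟨c, Relation.reflTransGen_swap.mp (ReflTransGen.head ?_ hda), ReflTransGen.refl⟩
      rw [hP]; exact ⟨c, ⟨rfl, hW⟩, hE⟩
    · exact ⟨c, h1.to_reflTransGen, h2.to_reflTransGen⟩
end

section
/- Let E ⊆ V×V and W ⊆ V, with P = Δ_{Wᶜ}E, B⁻ = P*ᵀ Eᵀ, K = (Pᵀ)⁺P⁺, and C = (Δ_W K Δ_W)⁺ ∪ Δ_W the conditional cousinhood relation. Then C (Pᵀ)* P* = C (Δ ∪ B⁻ Δ_{Wᶜ} ∪ K). -/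
open Relation Set

local infixr:80 " ∘r " => Relation.Comp

variable {V : Type*}

theorem stmt5 (E : V → V → Prop) (W : Set V)
    (P Bm K C : V → V → Prop)
    (hP : P = dia Wᶜ ∘r E)
    (hBm : Bm = flip (ReflTransGen P) ∘r flip E)
    (hK : K = TransGen (flip P) ∘r TransGen P)
    (hC : C = TransGen (dia W ∘r (K ∘r dia W)) ⊔ dia W) :
    C ∘r (ReflTransGen (flip P) ∘r ReflTransGen P)
      = C ∘r (dia (univ : Set V) ⊔ (Bm ∘r dia Wᶜ) ⊔ K) := by
  have hPW : ∀ b c, P b c → b ∈ Wᶜ := by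
    intro b c h
    rw [hP] at h
    obtain ⟨x, ⟨rfl, hx⟩, _⟩ := h
    exact hx
  have hPE : ∀ b c, P b c → E b c := by
    intro b c h
    rw [hP] at h
    obtain ⟨x, ⟨rfl, hx⟩, h⟩ := h
    exact h
  have hCW : ∀ a b, C a b → b ∈ W := by
    intro a b h
    rw [hC] at h
    simp only [Pi.sup_apply, sup_Prop_eq] at h
    rcases h with h | h
    · cases h with
      | single h => obtain ⟨x, _, y, _, rfl, hy⟩ := h; exact hy
      | tail _ h => obtain ⟨x, _, y, _, rfl, hy⟩ := h; exact hy
    · exact h.1 ▸ h.2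
  funext a d
  apply propext
  simp only [Comp, Pi.sup_apply, sup_Prop_eq]
  constructor
  · rintro ⟨b, hab, c, hbc, hcd⟩
    rcases reflTransGen_iff_eq_or_transGen.mp hbc with rfl | hbc
    · rcases reflTransGen_iff_eq_or_transGen.mp hcd with rfl | hcd
      · exact ⟨_, hab, Or.inl (Or.inl ⟨rfl, trivial⟩)⟩
      · -- c ∈ W but P starts in Wᶜ : contradiction
        obtain ⟨x, hcx, _⟩ := TransGen.head'_iff.mp hcd
        exact absurd (hCW a c hab) (hPW c x hcx)
    · rcases reflTransGen_iff_eq_or_transGen.mp hcd with rfl | hcd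
      · -- TransGen (flip P) b c : gives Bm ∘ dia Wᶜ
        obtain ⟨m, hbm, hmc⟩ := TransGen.tail'_iff.mp hbc
        refine ⟨b, hab, Or.inl (Or.inr ⟨d, ?_, rfl, hPW d m hmc⟩)⟩
        rw [hBm]
        exact ⟨m, reflTransGen_swap.mp hbm, hPE d m hmc⟩
      · exact ⟨b, hab, Or.inr (hK ▸ ⟨c, hbc, hcd⟩)⟩
  · rintro ⟨b, hab, (⟨rfl, -⟩ | ⟨x, hbx, rfl, hx⟩) | hbd⟩
    · exact ⟨b, hab, b, ReflTransGen.refl, ReflTransGen.refl⟩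
    · rw [hBm] at hbx
      obtain ⟨c, hcb, hxc⟩ := hbx
      have hPxc : P x c := by
        rw [hP]; exact ⟨x, ⟨rfl, hx⟩, hxc⟩
      have : TransGen P x b := TransGen.head' hPxc hcb
      exact ⟨b, hab, x, (transGen_swap.mpr this).to_reflTransGen, ReflTransGen.refl⟩
    · rw [hK] at hbd
      obtain ⟨m, h1, h2⟩ := hbd
      exact ⟨b, hab, m, h1.to_reflTransGen, h2.to_reflTransGen⟩
end

section
/- Let E ⊆ V×V and W ⊆ V, with P = Δ_{Wᶜ}E, K = (Pᵀ)⁺P⁺, and C = (Δ_W K Δ_W)⁺ ∪ Δ_W. Then C (Pᵀ)* P* C = C; in particular the conditional cousinhood relation C absorbs (Pᵀ)*P* on both sides. -/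
open Relation Set

local infixr:80 " ∘r " => Relation.Comp

variable {V : Type*}

theorem stmt6 (E : V → V → Prop) (W : Set V)
    (P K C : V → V → Prop)
    (hP : P = dia Wᶜ ∘r E)
    (hK : K = TransGen (flip P) ∘r TransGen P)
    (hC : C = TransGen (dia W ∘r (K ∘r dia W)) ⊔ dia W) :
    C ∘r (ReflTransGen (flip P) ∘r (ReflTransGen P ∘r C)) = C := by
  have hPdom : ∀ a b, P a b → a ∉ W := by
    subst hP; rintro a b ⟨x, ⟨rfl, h⟩, _⟩; exact h
  have hTPdom : ∀ a b, TransGen P a b → a ∉ W := by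
    intro a b h
    obtain ⟨c, hc, -⟩ := (Relation.TransGen.head'_iff).mp h
    exact hPdom _ _ hc
  have hTfdom : ∀ a b, TransGen (flip P) a b → b ∉ W := by
    intro a b h
    cases h with
    | single h => exact hPdom _ _ h
    | tail _ h => exact hPdom _ _ h
  have hSW : ∀ a b, (dia W ∘r (K ∘r dia W)) a b → a ∈ W ∧ b ∈ W := by
    rintro a b ⟨x, ⟨rfl, haW⟩, y, _, rfl, hbW⟩
    exact ⟨haW, hbW⟩
  have hCW : ∀ a b, C a b → a ∈ W ∧ b ∈ W := by
    rw [hC]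
    rintro a b (h | ⟨rfl, haW⟩)
    · constructor
      · obtain ⟨c, hc, -⟩ := (Relation.TransGen.head'_iff).mp h
        exact (hSW _ _ hc).1
      · cases h with
        | single h => exact (hSW _ _ h).2
        | tail _ h => exact (hSW _ _ h).2
    · exact ⟨haW, haW⟩
  have hCtrans : ∀ a b c, C a b → C b c → C a c := by
    rw [hC]
    rintro a b c (hab | ⟨rfl, haW⟩) (hbc | ⟨rfl, hbW⟩)
    · exact Or.inl (hab.trans hbc)
    · exact Or.inl hab
    · exact Or.inl hbc
    · exact Or.inr ⟨rfl, haW⟩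
  ext a b
  constructor
  · rintro ⟨x, hax, y, hxy, z, hyz, hzb⟩
    have hxW : x ∈ W := (hCW _ _ hax).2
    have hzW : z ∈ W := (hCW _ _ hzb).1
    rcases (Relation.reflTransGen_iff_eq_or_transGen.mp hxy) with rfl | hxy'
    · rcases (Relation.reflTransGen_iff_eq_or_transGen.mp hyz) with rfl | hyz'
      · exact hCtrans _ _ _ hax hzb
      · exact absurd hxW (hTPdom _ _ hyz')
    · rcases (Relation.reflTransGen_iff_eq_or_transGen.mp hyz) with rfl | hyz'
      · exact absurd hzW (hTfdom _ _ hxy')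
      · have hK' : K x z := by rw [hK]; exact ⟨y, hxy', hyz'⟩
        have hxz : C x z := by
          rw [hC]
          exact Or.inl (TransGen.single ⟨x, ⟨rfl, hxW⟩, z, hK', rfl, hzW⟩)
        exact hCtrans _ _ _ (hCtrans _ _ _ hax hxz) hzb
  · intro h
    have haW : a ∈ W := (hCW _ _ h).1
    have haa : C a a := by rw [hC]; exact Or.inr ⟨rfl, haW⟩
    exact ⟨a, haa, a, .refl, a, .refl, h⟩
end

section
/- Let E ⊆ V×V and W ⊆ V, with P = Δ_{Wᶜ}E, B⁻ = P*ᵀEᵀ, K = (Pᵀ)⁺P⁺, and C = (Δ_W K Δ_W)⁺ ∪ Δ_W. Then C (Pᵀ)* P* Δ_{Wᶜ} = C (B⁻ ∪ K) Δ_{Wᶜ}. -/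
open Relation Set

local infixr:80 " ∘r " => Relation.Comp

variable {V : Type*}

theorem stmt7 (E : V → V → Prop) (W : Set V)
    (P Bm K C : V → V → Prop)
    (hP : P = dia Wᶜ ∘r E)
    (hBm : Bm = flip (ReflTransGen P) ∘r flip E)
    (hK : K = TransGen (flip P) ∘r TransGen P)
    (hC : C = TransGen (dia W ∘r (K ∘r dia W)) ⊔ dia W) :
    C ∘r (ReflTransGen (flip P) ∘r (ReflTransGen P ∘r dia Wᶜ))
      = C ∘r ((Bm ⊔ K) ∘r dia Wᶜ) := by
  have hCW : ∀ x a, C x a → a ∈ W := by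
    intro x a h
    rw [hC] at h
    rcases h with h | h
    · induction h with
      | single h => rcases h with ⟨_, _, _, _, heq, hW⟩; exact heq ▸ hW
      | tail _ h _ => rcases h with ⟨_, _, _, _, heq, hW⟩; exact heq ▸ hW
    · exact h.1 ▸ h.2
  have hPmem : ∀ a b, P a b → a ∈ Wᶜ ∧ E a b := by
    intro a b h; rw [hP] at h; rcases h with ⟨m, ⟨rfl, hm⟩, hE⟩; exact ⟨hm, hE⟩
  funext x d
  ext
  constructor
  · rintro ⟨a, hCa, b, hab, c, hbc, rfl, hdW⟩
    have haW := hCW x a hCa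
    refine ⟨a, hCa, c, ?_, rfl, hdW⟩
    rcases hab.cases_head with rfl | ⟨m, hm, hmb⟩
    · rcases hbc.cases_head with rfl | ⟨m, hm, _⟩
      · exact absurd haW hdW
      · exact absurd haW (hPmem _ _ hm).1
    · have hab' : TransGen (flip P) a b := TransGen.head' hm hmb
      rcases (reflTransGen_iff_eq_or_transGen.mp hbc) with rfl | hbc'
      · left
        have hca : TransGen P c a := transGen_swap.mp hab'
        rcases TransGen.head'_iff.mp hca with ⟨m', hcm, hma⟩
        rw [hBm]
        exact ⟨m', hma, (hPmem _ _ hcm).2⟩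
      · right
        exact hK ▸ ⟨b, hab', hbc'⟩
  · rintro ⟨a, hCa, b, hab, heq, hdW⟩
    obtain rfl : b = d := heq
    rcases hab with hB | hKab
    · rw [hBm] at hB
      rcases hB with ⟨m, hma, hEbm⟩
      have hPbm : P b m := hP ▸ ⟨b, ⟨rfl, hdW⟩, hEbm⟩
      have : TransGen P b a := TransGen.head' hPbm hma
      exact ⟨a, hCa, b, (transGen_swap.mpr this).to_reflTransGen,
        b, ReflTransGen.refl, rfl, hdW⟩
    · rw [hK] at hKab
      rcases hKab with ⟨m, h1, h2⟩
      exact ⟨a, hCa, m, h1.to_reflTransGen, b, h2.to_reflTransGen, rfl, hdW⟩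
end

section
/- Let E ⊆ V×V, W ⊆ V, P = Δ_{Wᶜ}E, B = E P*, B⁻ = Bᵀ, K = (Pᵀ)⁺P⁺, W* = E* W, C* = (Δ_{W*} K Δ_{W*})⁺ ∪ Δ_{W*}, A*+ = B ∪ K ∪ (B ∪ K) C* K and A*- = B⁻ ∪ (B ∪ K) C* B⁻. Then A*- Δ_{Wᶜ} E ⊆ A*+. -/
open Relation Set

local infixr:80 " ∘r " => Relation.Comp

variable {V : Type*}

theorem stmt9 (E : V → V → Prop) (W : Set V)
    (P B K Cs Ap Am : V → V → Prop) (Ws : Set V)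
    (hP : P = dia Wᶜ ∘r E)
    (hB : B = E ∘r ReflTransGen P)
    (hK : K = TransGen (flip P) ∘r TransGen P)
    (hWs : Ws = foreset (ReflTransGen E) W)
    (hCs : Cs = TransGen (dia Ws ∘r (K ∘r dia Ws)) ⊔ dia Ws)
    (hAp : Ap = B ⊔ K ⊔ ((B ⊔ K) ∘r (Cs ∘r K)))
    (hAm : Am = flip B ⊔ ((B ⊔ K) ∘r (Cs ∘r flip B))) :
    Am ∘r (dia Wᶜ ∘r E) ≤ Ap := by
  -- Key fact: flip B ∘ P ≤ K
  have key : ∀ a y z, flip B a y → P y z → K a z := by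
    intro a y z hBa hPyz
    have hBya : B y a := hBa
    rw [hB] at hBya
    obtain ⟨c, hEyc, hPca⟩ := hBya
    obtain ⟨w, ⟨rfl, hyW⟩, _⟩ : (dia Wᶜ ∘r E) y z := hP ▸ hPyz
    have hPyc : P y c := by rw [hP]; exact ⟨y, ⟨rfl, hyW⟩, hEyc⟩
    have hTya : TransGen P y a := TransGen.head' hPyc hPca
    rw [hK]
    exact ⟨y, hTya.swap, TransGen.single hPyz⟩
  rintro x z ⟨y, hAmxy, hPyz'⟩
  have hPyz : P y z := hP ▸ hPyz'
  rw [hAm] at hAmxy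
  rw [hAp]
  rcases hAmxy with hfB | ⟨u, hBK, v, hCsuv, hfBvy⟩
  · exact Or.inl (Or.inr (key x y z hfB hPyz))
  · exact Or.inr ⟨u, hBK, v, hCsuv, key v y z hfBvy hPyz⟩
end

section
/- Let E ⊆ V×V, W ⊆ V, P = Δ_{Wᶜ}E, B = E P*, B⁻ = Bᵀ, K = (Pᵀ)⁺P⁺, W* = E* W, C* = (Δ_{W*} K Δ_{W*})⁺ ∪ Δ_{W*}, A*+ = B ∪ K ∪ (B ∪ K) C* K and A*- = B⁻ ∪ (B ∪ K) C* B⁻. Then A*+ Δ_{W*} Eᵀ ⊆ A*-. -/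
open Relation Set

local infixr:80 " ∘r " => Relation.Comp

variable {V : Type*}

theorem stmt10 (E : V → V → Prop) (W : Set V)
    (P B K Cs Ap Am : V → V → Prop) (Ws : Set V)
    (hP : P = dia Wᶜ ∘r E)
    (hB : B = E ∘r ReflTransGen P)
    (hK : K = TransGen (flip P) ∘r TransGen P)
    (hWs : Ws = foreset (ReflTransGen E) W)
    (hCs : Cs = TransGen (dia Ws ∘r (K ∘r dia Ws)) ⊔ dia Ws)
    (hAp : Ap = B ⊔ K ⊔ ((B ⊔ K) ∘r (Cs ∘r K)))
    (hAm : Am = flip B ⊔ ((B ⊔ K) ∘r (Cs ∘r flip B))) :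
    Ap ∘r (dia Ws ∘r flip E) ≤ Am := by
  subst hAp hAm hCs
  have memCs : ∀ x y : V,
      (TransGen (dia Ws ∘r (K ∘r dia Ws)) ⊔ dia Ws) x y → y ∈ Ws := by
    intro x y h
    rcases h with h | ⟨rfl, hy⟩
    · induction h with
      | single h => obtain ⟨_, _, _, _, rfl, hy⟩ := h; exact hy
      | tail _ h ih => obtain ⟨_, _, _, _, rfl, hy⟩ := h; exact hy
    · exact hy
  rintro a b ⟨w, hap, w', ⟨rfl, hwWs⟩, hEbw⟩
  have hBwb : flip B w b := by
    rw [hB]; exact ⟨w, hEbw, ReflTransGen.refl⟩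
  have hCsww : (TransGen (dia Ws ∘r (K ∘r dia Ws)) ⊔ dia Ws) w w :=
    Or.inr ⟨rfl, hwWs⟩
  rcases hap with (hB' | hK') | ⟨m, hBK, n, hCsmn, hKnw⟩
  · exact Or.inr ⟨w, Or.inl hB', w, hCsww, hBwb⟩
  · exact Or.inr ⟨w, Or.inr hK', w, hCsww, hBwb⟩
  · have hnWs : n ∈ Ws := memCs _ _ hCsmn
    have step : (dia Ws ∘r (K ∘r dia Ws)) n w :=
      ⟨n, ⟨rfl, hnWs⟩, w, hKnw, ⟨rfl, hwWs⟩⟩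
    have hCsmw : TransGen (dia Ws ∘r (K ∘r dia Ws)) m w := by
      rcases hCsmn with h | ⟨rfl, _⟩
      · exact h.tail step
      · exact TransGen.single step
    exact Or.inr ⟨m, hBK, w, Or.inl hCsmw, hBwb⟩
end

section
/- Let E ⊆ V×V, W ⊆ V, P = Δ_{Wᶜ}E, and W* = E* W. Then P* Δ_W P*ᵀ = P* Δ_{W*} P*ᵀ. -/
open Relation Set

local infixr:80 " ∘r " => Relation.Comp

variable {V : Type*}

theorem stmt11 (E : V → V → Prop) (W : Set V)
    (P : V → V → Prop) (Ws : Set V)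
    (hP : P = dia Wᶜ ∘r E)
    (hWs : Ws = foreset (ReflTransGen E) W) :
    ReflTransGen P ∘r (dia W ∘r flip (ReflTransGen P))
      = ReflTransGen P ∘r (dia Ws ∘r flip (ReflTransGen P)) := by
  have key : ∀ x c, ReflTransGen E x c → c ∈ W → ∃ w ∈ W, ReflTransGen P x w := by
    intro x c h hc
    induction h using ReflTransGen.head_induction_on with
    | refl => exact ⟨_, hc, ReflTransGen.refl⟩
    | head hxy _ ih =>
      rename_i a b _
      by_cases ha : a ∈ W
      · exact ⟨a, ha, ReflTransGen.refl⟩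
      · obtain ⟨w, hw, hpw⟩ := ih
        exact ⟨w, hw, ReflTransGen.head (by rw [hP]; exact ⟨a, ⟨rfl, ha⟩, hxy⟩) hpw⟩
  funext a b
  ext
  constructor
  · rintro ⟨m, ham, m', ⟨rfl, hm⟩, hbm⟩
    exact ⟨m, ham, m, ⟨rfl, by rw [hWs]; exact ⟨m, hm, ReflTransGen.refl⟩⟩, hbm⟩
  · rintro ⟨m, ham, m', ⟨rfl, hm⟩, hbm⟩
    rw [hWs] at hm
    obtain ⟨c, hc, hmc⟩ := hm
    obtain ⟨w, hw, hmw⟩ := key m c hmc hc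
    exact ⟨w, ham.trans hmw, w, ⟨rfl, hw⟩, ReflTransGen.trans hbm hmw⟩
end

section
/- Let E ⊆ V×V, W ⊆ V, P = Δ_{Wᶜ}E, B = E P*, B⁻ = Bᵀ, K = (Pᵀ)⁺P⁺, C = (Δ_W K Δ_W)⁺ ∪ Δ_W, W* = E* W, and C* = (Δ_{W*} K Δ_{W*})⁺ ∪ Δ_{W*}. Then the conditional active relation A = Δ ∪ B ∪ B⁻ ∪ K ∪ (B ∪ K) C (B⁻ ∪ K) equals the star conditional active relation A* = Δ ∪ B ∪ B⁻ ∪ K ∪ (B ∪ K) C* (B⁻ ∪ K). -/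
/-!
Every vertex of `W* = E* W` reaches `W` along `P*`: follow an `E`-path into `W` up to its first
vertex in `W`; every earlier edge starts outside `W`, so it is a `P`-edge. Both `B` and `K` absorb
`P*` at their right end, and `B⁻` and `K` at their left end, so each vertex of a `C*`-chain
through `W*` can be replaced by such a representative in `W`, turning it into a `C`-chain with
the same effect inside `(B ∪ K) _ (B⁻ ∪ K)`. Conversely `C ⊆ C*` because `W ⊆ W*`.
-/

open Relation Set

local infixr:80 " ∘r " => Relation.Comp

variable {V : Type*}

def cousin (K : V → V → Prop) (W : Set V) : V → V → Prop :=
  TransGen (dia W ∘r (K ∘r dia W)) ⊔ dia W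

lemma exists_mem_reflTransGen_of_mem_foreset {E : V → V → Prop} {W : Set V} {x : V}
    (hx : x ∈ foreset (ReflTransGen E) W) : ∃ w ∈ W, ReflTransGen (dia Wᶜ ∘r E) x w := by
  obtain ⟨w, hw, hxw⟩ := hx
  induction hxw using ReflTransGen.head_induction_on with
  | refl => exact ⟨w, hw, .refl⟩
  | @head c c' hcc' _ ih =>
    by_cases hc : c ∈ W
    · exact ⟨c, hc, .refl⟩
    · obtain ⟨w', hw', hc'w'⟩ := ih
      exact ⟨w', hw', .head ⟨c, ⟨rfl, hc⟩, hcc'⟩ hc'w'⟩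

lemma transGen_flip_comp_transGen_of_reflTransGen {P : V → V → Prop} {x x' y y' : V}
    (hx : ReflTransGen P x x') (hy : ReflTransGen P y y')
    (h : (TransGen (flip P) ∘r TransGen P) x y) : (TransGen (flip P) ∘r TransGen P) x' y' := by
  obtain ⟨m, hmx, hmy⟩ := h
  exact ⟨m, TransGen.trans_right hx.swap hmx, hmy.trans_left hy⟩

lemma comp_reflTransGen_of_reflTransGen {E P : V → V → Prop} {a x w : V}
    (hxw : ReflTransGen P x w) (h : (E ∘r ReflTransGen P) a x) : (E ∘r ReflTransGen P) a w :=
  let ⟨m, ham, hmx⟩ := h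
  ⟨m, ham, hmx.trans hxw⟩

lemma cousin_mono {K : V → V → Prop} {W W' : Set V} (hW : W ⊆ W') : cousin K W ≤ cousin K W' := by
  rintro x y (h | ⟨rfl, hx⟩)
  · refine .inl (TransGen.mono ?_ x y h)
    rintro u v ⟨_, ⟨rfl, hu⟩, v, huv, rfl, hv⟩
    exact ⟨u, ⟨rfl, hW hu⟩, v, huv, rfl, hW hv⟩
  · exact .inr ⟨rfl, hW hx⟩

section Representatives

variable {K R : V → V → Prop} {W W' : Set V}

lemma exists_cousin_of_cousin (hrep : ∀ x ∈ W', ∃ w ∈ W, R x w)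
    (hK : ∀ {x x' y y'}, R x x' → R y y' → K x y → K x' y') {x y : V} (h : cousin K W' x y) :
    ∃ w w', R x w ∧ R y w' ∧ cousin K W w w' := by
  rcases h with h | ⟨rfl, hx⟩
  · suffices ∃ w w', R x w ∧ R y w' ∧ w' ∈ W ∧ TransGen (dia W ∘r (K ∘r dia W)) w w' by
      obtain ⟨w, w', hxw, hyw', -, h⟩ := this
      exact ⟨w, w', hxw, hyw', .inl h⟩
    induction h with
    | single h =>
      obtain ⟨_, ⟨rfl, hx⟩, _, hxy, rfl, hy⟩ := h
      obtain ⟨w, hw, hxw⟩ := hrep _ hx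
      obtain ⟨w', hw', hyw'⟩ := hrep _ hy
      exact ⟨w, w', hxw, hyw', hw', .single ⟨w, ⟨rfl, hw⟩, w', hK hxw hyw' hxy, rfl, hw'⟩⟩
    | tail _ h ih =>
      obtain ⟨w, w', hxw, hyw', hw', hww'⟩ := ih
      obtain ⟨_, ⟨rfl, -⟩, _, hyz, rfl, hz⟩ := h
      obtain ⟨w'', hw'', hzw''⟩ := hrep _ hz
      exact ⟨w, w'', hxw, hzw'', hw'', hww'.tail ⟨w', ⟨rfl, hw'⟩, w'', hK hyw' hzw'' hyz, rfl, hw''⟩⟩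
  · obtain ⟨w, hw, hxw⟩ := hrep _ hx
    exact ⟨w, w, hxw, hxw, .inr ⟨rfl, hw⟩⟩

lemma comp_cousin_comp_eq {L M : V → V → Prop} (hW : W ⊆ W') (hrep : ∀ x ∈ W', ∃ w ∈ W, R x w)
    (hK : ∀ {x x' y y'}, R x x' → R y y' → K x y → K x' y')
    (hL : ∀ {a x w}, R x w → L a x → L a w) (hM : ∀ {y w b}, R y w → M y b → M w b) :
    L ∘r (cousin K W ∘r M) = L ∘r (cousin K W' ∘r M) := by
  funext a b
  refine propext ⟨fun ⟨x, hax, y, hxy, hyb⟩ => ⟨x, hax, y, cousin_mono hW x y hxy, hyb⟩, ?_⟩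
  rintro ⟨x, hax, y, hxy, hyb⟩
  obtain ⟨w, w', hxw, hyw', hww'⟩ := exists_cousin_of_cousin hrep hK hxy
  exact ⟨w, hL hxw hax, w', hww', hM hyw' hyb⟩

end Representatives

theorem stmt12 (E : V → V → Prop) (W : Set V)
    (P B K C Cs : V → V → Prop) (Ws : Set V)
    (hP : P = dia Wᶜ ∘r E)
    (hB : B = E ∘r ReflTransGen P)
    (hK : K = TransGen (flip P) ∘r TransGen P)
    (hC : C = TransGen (dia W ∘r (K ∘r dia W)) ⊔ dia W)
    (hWs : Ws = foreset (ReflTransGen E) W)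
    (hCs : Cs = TransGen (dia Ws ∘r (K ∘r dia Ws)) ⊔ dia Ws) :
    dia (univ : Set V) ⊔ B ⊔ flip B ⊔ K ⊔ ((B ⊔ K) ∘r (C ∘r (flip B ⊔ K)))
      = dia (univ : Set V) ⊔ B ⊔ flip B ⊔ K ⊔ ((B ⊔ K) ∘r (Cs ∘r (flip B ⊔ K))) := by
  subst hP hB hK hC hWs hCs
  congr 1
  refine comp_cousin_comp_eq (fun w hw => ⟨w, hw, .refl⟩)
    (fun x hx => exists_mem_reflTransGen_of_mem_foreset hx)
    transGen_flip_comp_transGen_of_reflTransGen ?_ ?_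
  · exact fun hxw => Or.imp (comp_reflTransGen_of_reflTransGen hxw)
      (transGen_flip_comp_transGen_of_reflTransGen .refl hxw)
  · exact fun hyw => Or.imp (comp_reflTransGen_of_reflTransGen hyw)
      (transGen_flip_comp_transGen_of_reflTransGen hyw .refl)
end

section
/- Let E ⊆ V×V, W ⊆ V, P = Δ_{Wᶜ}E, K = (Pᵀ)⁺P⁺, and C = (Δ_W K Δ_W)⁺ ∪ Δ_W. Then C is a partial equivalence relation: it is symmetric (Cᵀ = C) and transitive (C C ⊆ C). -/
open Relation Set

local infixr:80 " ∘r " => Relation.Comp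

variable {V : Type*}

/-! `K = (P⁺)ᵀ P⁺` is symmetric for any `P`. Symmetry survives restricting to `W` on both sides,
taking the transitive closure and adding `Δ_W`; transitivity survives adding a subdiagonal. -/

section

variable {α : Type*}

instance Relation.symm_transGen_flip_comp_transGen (R : α → α → Prop) :
    Std.Symm (TransGen (flip R) ∘r TransGen R) where
  symm _ _ := fun ⟨c, hac, hcb⟩ => ⟨c, transGen_swap.2 hcb, transGen_swap.2 hac⟩

instance Pi.symm_sup (R S : α → α → Prop) [Std.Symm R] [Std.Symm S] : Std.Symm (R ⊔ S) where
  symm _ _ := Or.imp (symm_of R) (symm_of S)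

theorem Relation.comp_self_le {R : α → α → Prop} [IsTrans α R] : R ∘r R ≤ R :=
  fun _ _ ⟨_, hab, hbc⟩ => _root_.trans hab hbc

end

instance symm_dia (X : Set V) : Std.Symm (dia X) where
  symm _ _ := fun ⟨hab, ha⟩ => ⟨hab.symm, hab ▸ ha⟩

instance symm_dia_comp_comp_dia (X : Set V) (K : V → V → Prop) [Std.Symm K] :
    Std.Symm (dia X ∘r (K ∘r dia X)) where
  symm _ _ := by
    rintro ⟨_, ⟨rfl, ha⟩, _, hK, rfl, hb⟩
    exact ⟨_, ⟨rfl, hb⟩, _, symm_of K hK, rfl, ha⟩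

instance isTrans_sup_dia (X : Set V) (T : V → V → Prop) [IsTrans V T] :
    IsTrans V (T ⊔ dia X) where
  trans _ _ _ := by
    rintro (hab | ⟨rfl, -⟩) (hbc | hbc)
    exacts [.inl (_root_.trans hab hbc), .inl (hbc.1 ▸ hab), .inl hbc, .inr hbc]

theorem stmt14_general (W : Set V)
    (P K C : V → V → Prop)
    (hK : K = TransGen (flip P) ∘r TransGen P)
    (hC : C = TransGen (dia W ∘r (K ∘r dia W)) ⊔ dia W) :
    flip C = C ∧ C ∘r C ≤ C := by
  subst hK hC
  exact ⟨Std.Symm.flip_eq, comp_self_le⟩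

theorem stmt14 (E : V → V → Prop) (W : Set V)
    (P K C : V → V → Prop)
    (hP : P = dia Wᶜ ∘r E)
    (hK : K = TransGen (flip P) ∘r TransGen P)
    (hC : C = TransGen (dia W ∘r (K ∘r dia W)) ⊔ dia W) :
    flip C = C ∧ C ∘r C ≤ C :=
  stmt14_general W P K C hK hC
end

section
/- Let E ⊆ V×V and W ⊆ V, and define P = Δ_{Wᶜ}E and K = (Pᵀ)⁺P⁺. Then K is symmetric, and for any vertices a, c with a K c there exists a vertex d ∈ Wᶜ such that a (P*ᵀ Eᵀ) d and d (E P*) c; conversely, if such a d ∈ Wᶜ exists then a K c. That is, K = B⁻ Δ_{Wᶜ} B where B = E P* and B⁻ = Bᵀ. -/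
open Relation Set

local infixr:80 " ∘r " => Relation.Comp

variable {V : Type*}

lemma transP_iff (E : V → V → Prop) (W : Set V) (P B : V → V → Prop)
    (hP : P = dia Wᶜ ∘r E) (hB : B = E ∘r ReflTransGen P) (d c : V) :
    TransGen P d c ↔ d ∈ Wᶜ ∧ B d c := by
  rw [TransGen.head'_iff, hB]
  constructor
  · rintro ⟨x, hdx, hxc⟩
    rw [hP] at hdx
    obtain ⟨y, ⟨rfl, hd⟩, hE⟩ := hdx
    exact ⟨hd, x, hE, hxc⟩
  · rintro ⟨hd, x, hE, hxc⟩
    exact ⟨x, by rw [hP]; exact ⟨d, ⟨rfl, hd⟩, hE⟩, hxc⟩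

theorem stmt17 (E : V → V → Prop) (W : Set V)
    (P B K : V → V → Prop)
    (hP : P = dia Wᶜ ∘r E)
    (hB : B = E ∘r ReflTransGen P)
    (hK : K = TransGen (flip P) ∘r TransGen P) :
    flip K = K ∧ K = flip B ∘r (dia Wᶜ ∘r B) := by
  have hflip : ∀ a b : V, TransGen (flip P) a b ↔ TransGen P b a := by
    intro a b; exact Relation.transGen_swap
  have hKiff : ∀ a c : V, K a c ↔ ∃ d, d ∈ Wᶜ ∧ B d a ∧ B d c := by
    intro a c
    rw [hK]
    constructor
    · rintro ⟨d, hda, hdc⟩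
      rw [hflip, transP_iff E W P B hP hB] at hda
      rw [transP_iff E W P B hP hB] at hdc
      exact ⟨d, hda.1, hda.2, hdc.2⟩
    · rintro ⟨d, hd, hda, hdc⟩
      exact ⟨d, (hflip a d).2 ((transP_iff E W P B hP hB d a).2 ⟨hd, hda⟩),
        (transP_iff E W P B hP hB d c).2 ⟨hd, hdc⟩⟩
  constructor
  · funext a c
    simp only [flip, eq_iff_iff]
    rw [hKiff, hKiff]
    exact ⟨fun ⟨d, h1, h2, h3⟩ => ⟨d, h1, h3, h2⟩, fun ⟨d, h1, h2, h3⟩ => ⟨d, h1, h3, h2⟩⟩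
  · funext a c
    rw [eq_iff_iff, hKiff]
    constructor
    · rintro ⟨d, hd, hda, hdc⟩
      exact ⟨d, hda, d, ⟨rfl, hd⟩, hdc⟩
    · rintro ⟨d, hda, e, ⟨rfl, hd⟩, hdc⟩
      exact ⟨d, hd, hda, hdc⟩
end
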